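/- arXiv:2511.22386 — 5 statements merged into one kernel-verified Lean document; each statement's English description precedes it below -/
import Mathlib

section
/- Minimal revision is universal on the class of finitely identifiable epistemic spaces: if an epistemic space has a definite finite tell-tale map, then the canonical learning method induced by minimal revision with the uniform (all states equi-plausible) prior identifies every state of the space in the limit. -/
/-!
Under minimal revision by `p`, the new most plausible states are exactly the most plausible
states of `p`. So as long as every observation holds at some currently most plausible state
(which soundness guarantees, since `s` stays most plausible throughout), the most plausible
states after a finite sequence of observations are the old ones that satisfy all of them.
With the uniform prior this means the learner conjectures exactly the states consistent with
the data. Once the finitely many observables of the tell-tale `D s` have appeared in the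
stream, only `s` is consistent with the data.
-/

namespace Epi

variable {W : Type*}

/-- The set of observables true at state `s`. -/
def obsAt (O : Set (Set W)) (s : W) : Set (Set W) := {p ∈ O | s ∈ p}

/-- The epistemic-space separation condition: distinct worlds satisfy distinct observables. -/
def Separating (O : Set (Set W)) : Prop := ∀ s t : W, obsAt O s = obsAt O t → s = t

/-- `≼`-minimal elements of a set `X`. -/
def minIn (R : W → W → Prop) (X : Set W) : Set W :=
  {s ∈ X | ∀ t ∈ X, (R s t ∨ R t s) → R s t}

def PreorderOn (R : W → W → Prop) : Prop := Reflexive R ∧ Transitive R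

def TotalPreorderOn (R : W → W → Prop) : Prop :=
  Reflexive R ∧ Transitive R ∧ ∀ s t : W, R s t ∨ R t s

/-- Strict part of a preorder. -/
def strictR (R : W → W → Prop) (s t : W) : Prop := R s t ∧ ¬ R t s

/-- One-step minimal revision (conservative upgrade) by observable `p`. -/
def miniRev (R : W → W → Prop) (p : Set W) : W → W → Prop :=
  fun s t => (s ∈ minIn R p ∧ t ∉ minIn R p) ∨
    (R s t ∧ ¬ (t ∈ minIn R p ∧ s ∉ minIn R p))

/-- One-step lexicographic upgrade by observable `p`. -/
def lexRev (R : W → W → Prop) (p : Set W) : W → W → Prop :=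
  fun s t => (s ∈ p ∧ t ∈ p ∧ R s t) ∨ (s ∉ p ∧ t ∉ p ∧ R s t) ∨ (s ∈ p ∧ t ∉ p)

/-- Iterated belief revision along a finite data sequence. -/
def iterRev (rev : (W → W → Prop) → Set W → (W → W → Prop))
    (R : W → W → Prop) (σ : List (Set W)) : W → W → Prop :=
  σ.foldl rev R

/-- The initial segment of length `n` of a data stream. -/
def seg (f : ℕ → Set W) (n : ℕ) : List (Set W) := (List.range n).map f

/-- All elements of the stream are observables. -/
def StreamIn (O : Set (Set W)) (f : ℕ → Set W) : Prop := ∀ n, f n ∈ O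

/-- Soundness of a stream w.r.t. `s`. -/
def SoundStream (s : W) (f : ℕ → Set W) : Prop := ∀ n, s ∈ f n

/-- Completeness of a stream w.r.t. `s`. -/
def CompleteStream (O : Set (Set W)) (s : W) (f : ℕ → Set W) : Prop :=
  ∀ p ∈ obsAt O s, ∃ n, f n = p

/-- Canonical learner induced by minimal revision and prior `R`. -/
def miniLearner (R : W → W → Prop) (σ : List (Set W)) : Set W :=
  minIn (iterRev miniRev R σ) Set.univ

/-- Canonical learner induced by lexicographic upgrade and prior `R`. -/
def lexLearner (R : W → W → Prop) (σ : List (Set W)) : Set W :=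
  minIn (iterRev lexRev R σ) Set.univ

/-- Canonical learner induced by conditioning and prior `R`:
minimal elements among the worlds surviving all observations in `σ`. -/
def condLearner (R : W → W → Prop) (σ : List (Set W)) : Set W :=
  minIn R {w | ∀ p ∈ σ, w ∈ p}

/-- A learner identifies state `s` in the limit. -/
def IdentifiesInLimit (O : Set (Set W)) (L : List (Set W) → Set W) (s : W) : Prop :=
  ∀ f : ℕ → Set W, StreamIn O f → SoundStream s f → CompleteStream O s f →
    ∃ n, ∀ k, n ≤ k → L (seg f k) = {s}

/-- Finite identification: the learner makes exactly one guess, and it is correct. -/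
def FinitelyIdentifies (O : Set (Set W)) (L : List (Set W) → Option W) (s : W) : Prop :=
  ∀ f : ℕ → Set W, StreamIn O f → SoundStream s f → CompleteStream O s f →
    ∃ n, L (seg f n) = some s ∧ ∀ m, m ≠ n → L (seg f m) = none

/-- A definite finite tell-tale map. -/
def DFTTMap (O : Set (Set W)) (D : W → Set (Set W)) : Prop :=
  ∀ s : W, (D s).Finite ∧ D s ⊆ obsAt O s ∧ ∀ t : W, D s ⊆ obsAt O t → s = t

/-- A finite space mini tell-tale map for `R` and the space. -/
def FSMiniTellTaleMap (O : Set (Set W)) (R : W → W → Prop) (F : W → Set (Set W)) : Prop :=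
  ∀ s : W, F s ⊆ obsAt O s ∧
    ∃ p ∈ F s, s ∈ minIn R p ∧
      ∀ t : W, t ≠ s → (R s t ∧ R t s) → t ∈ minIn R p →
        ∃ q ∈ F s, s ∈ minIn R q ∧ t ∉ minIn R q

/-- A generalised conditioning tell-tale map for `R` and the space. -/
def GenCondTellTaleMap (O : Set (Set W)) (R : W → W → Prop) (F : W → Set (Set W)) : Prop :=
  ∀ s : W,
    (F s).Finite ∧ F s ⊆ obsAt O s ∧
    (∀ t : W, (R s t ∨ R t s) → F s ⊆ obsAt O t → s ≠ t → strictR R s t) ∧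
    (∀ F' : Set (Set W), F'.Finite → F s ⊆ F' → F' ⊆ obsAt O s →
      ∀ t : W, ¬ (R s t ∨ R t s) → F' ⊆ obsAt O t →
        ∃ v : W, strictR R v t ∧ F' ⊆ obsAt O v)

/-- Fair data stream w.r.t. `s` (finitely many, eventually corrected, errors). -/
def FairStream (O : Set (Set W)) (s : W) (f : ℕ → Set W) : Prop :=
  CompleteStream O s f ∧ (∃ n, ∀ k, n ≤ k → s ∈ f k) ∧
    (∀ i, s ∉ f i → ∃ k, i < k ∧ f k = (f i)ᶜ)

variable {R : W → W → Prop} {p : Set W} {s : W}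

lemma TotalPreorderOn.rel_of_mem_minIn (hR : TotalPreorderOn R) {a t : W}
    (ha : a ∈ minIn R p) (ht : t ∈ p) : R a t :=
  ha.2 t ht (hR.2.2 a t)

lemma mem_minIn_of_forall_rel {X : Set W} {a : W} (ha : a ∈ X) (h : ∀ t, R a t) :
    a ∈ minIn R X :=
  ⟨ha, fun t _ _ => h t⟩

lemma TotalPreorderOn.minIn_eq_inter (hR : TotalPreorderOn R)
    (hs : s ∈ p ∩ minIn R Set.univ) : minIn R p = p ∩ minIn R Set.univ := by
  ext a
  constructor
  · intro ha
    refine ⟨ha.1, mem_minIn_of_forall_rel (Set.mem_univ a) fun t => ?_⟩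
    exact hR.2.1 (hR.rel_of_mem_minIn ha hs.1) (hR.rel_of_mem_minIn hs.2 (Set.mem_univ t))
  · rintro ⟨hap, ha⟩
    exact ⟨hap, fun t _ => ha.2 t (Set.mem_univ t)⟩

lemma totalPreorderOn_miniRev (hR : TotalPreorderOn R) (p : Set W) :
    TotalPreorderOn (miniRev R p) := by
  obtain ⟨hrefl, htrans, htot⟩ := hR
  set M := minIn R p
  refine ⟨fun a => Or.inr ⟨hrefl a, fun h => h.2 h.1⟩, fun {a b c} hab hbc => ?_, fun a b => ?_⟩
  · by_cases ha : a ∈ M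
    · by_cases hc : c ∈ M
      · exact Or.inr ⟨ha.2 c hc.1 (htot a c), fun h => h.2 ha⟩
      · exact Or.inl ⟨ha, hc⟩
    -- Outside `M` the revised order is `R` restricted to steps that never re-enter `M`.
    have hab' : R a b ∧ b ∉ M := by
      rcases hab with h | h
      · exact absurd h.1 ha
      · exact ⟨h.1, fun hb => h.2 ⟨hb, ha⟩⟩
    have hbc' : R b c ∧ c ∉ M := by
      rcases hbc with h | h
      · exact absurd h.1 hab'.2
      · exact ⟨h.1, fun hc => h.2 ⟨hc, hab'.2⟩⟩
    exact Or.inr ⟨htrans hab'.1 hbc'.1, fun h => hbc'.2 h.1⟩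
  · by_cases ha : a ∈ M <;> by_cases hb : b ∈ M
    · rcases htot a b with h | h
      · exact Or.inl (Or.inr ⟨h, fun hc => hc.2 ha⟩)
      · exact Or.inr (Or.inr ⟨h, fun hc => hc.2 hb⟩)
    · exact Or.inl (Or.inl ⟨ha, hb⟩)
    · exact Or.inr (Or.inl ⟨hb, ha⟩)
    · rcases htot a b with h | h
      · exact Or.inl (Or.inr ⟨h, fun hc => hb hc.1⟩)
      · exact Or.inr (Or.inr ⟨h, fun hc => ha hc.1⟩)

lemma TotalPreorderOn.miniRev_of_mem_minIn (hR : TotalPreorderOn R) {a : W}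
    (ha : a ∈ minIn R p) (t : W) : miniRev R p a t := by
  by_cases ht : t ∈ minIn R p
  · exact Or.inr ⟨hR.rel_of_mem_minIn ha ht.1, fun h => h.2 ha⟩
  · exact Or.inl ⟨ha, ht⟩

lemma TotalPreorderOn.minIn_miniRev (hR : TotalPreorderOn R) (hp : (minIn R p).Nonempty) :
    minIn (miniRev R p) Set.univ = minIn R p := by
  obtain ⟨b, hb⟩ := hp
  ext a
  constructor
  · intro ha
    by_contra haM
    rcases ha.2 b (Set.mem_univ b) (Or.inr (Or.inl ⟨hb, haM⟩)) with h | h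
    · exact haM h.1
    · exact h.2 ⟨hb, haM⟩
  · intro ha
    exact mem_minIn_of_forall_rel (Set.mem_univ a) (hR.miniRev_of_mem_minIn ha)

lemma TotalPreorderOn.minIn_iterRev_miniRev (σ : List (Set W)) (hR : TotalPreorderOn R)
    (hs : s ∈ minIn R Set.univ) (hσ : ∀ p ∈ σ, s ∈ p) :
    minIn (iterRev miniRev R σ) Set.univ = {w | ∀ p ∈ σ, w ∈ p} ∩ minIn R Set.univ := by
  induction σ generalizing R with
  | nil => simp [iterRev]
  | cons p σ ih =>
    have hsp : s ∈ p ∩ minIn R Set.univ := ⟨hσ p List.mem_cons_self, hs⟩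
    have hmin : minIn (miniRev R p) Set.univ = p ∩ minIn R Set.univ := by
      rw [hR.minIn_miniRev ⟨s, (hR.minIn_eq_inter hsp).symm ▸ hsp⟩, hR.minIn_eq_inter hsp]
    have hs' : s ∈ minIn (miniRev R p) Set.univ := hmin ▸ hsp
    change minIn (iterRev miniRev (miniRev R p) σ) Set.univ = _
    rw [ih (totalPreorderOn_miniRev hR p) hs' fun q hq => hσ q (List.mem_cons_of_mem p hq), hmin]
    ext w
    simp only [Set.mem_inter_iff, Set.mem_ofPred_eq, List.forall_mem_cons]
    tauto

lemma totalPreorderOn_uniform : TotalPreorderOn (fun _ _ : W => True) :=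
  ⟨fun _ => trivial, fun _ _ _ _ _ => trivial, fun _ _ => Or.inl trivial⟩

lemma minIn_uniform_univ : minIn (fun _ _ : W => True) Set.univ = Set.univ := by
  ext a
  simp [minIn]

lemma miniLearner_uniform {σ : List (Set W)} (hσ : ∀ p ∈ σ, s ∈ p) :
    miniLearner (fun _ _ : W => True) σ = {w | ∀ p ∈ σ, w ∈ p} := by
  rw [miniLearner, TotalPreorderOn.minIn_iterRev_miniRev σ totalPreorderOn_uniform
    (minIn_uniform_univ.symm ▸ Set.mem_univ s) hσ, minIn_uniform_univ, Set.inter_univ]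

lemma mem_seg {f : ℕ → Set W} {k : ℕ} : p ∈ seg f k ↔ ∃ n < k, f n = p := by
  simp [seg]

lemma eventually_subset_seg {F : Set (Set W)} (hF : F.Finite) {f : ℕ → Set W}
    (hf : F ⊆ Set.range f) : ∃ N, ∀ k ≥ N, ∀ p ∈ F, p ∈ seg f k := by
  refine Filter.eventually_atTop.mp ((Filter.eventually_all_finite hF).mpr fun p hp => ?_)
  obtain ⟨n, rfl⟩ := hf hp
  exact Filter.eventually_atTop.mpr ⟨n + 1, fun k hk => mem_seg.mpr ⟨n, hk, rfl⟩⟩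

theorem mini_universal_on_finitely_identifiable_general {W : Type*} (O : Set (Set W))
    (D : W → Set (Set W)) (hD : DFTTMap O D) :
    ∀ s : W, IdentifiesInLimit O (miniLearner (fun _ _ : W => True)) s := by
  intro s f _ hsound hcomp
  obtain ⟨hfin, hsub, huniq⟩ := hD s
  obtain ⟨N, hN⟩ := eventually_subset_seg hfin fun p hp => hcomp p (hsub hp)
  refine ⟨N, fun k hk => ?_⟩
  have hseg : ∀ p ∈ seg f k, s ∈ p := fun p hp => by
    obtain ⟨n, -, rfl⟩ := mem_seg.mp hp
    exact hsound n
  rw [miniLearner_uniform hseg]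
  ext t
  refine ⟨fun ht => (huniq t fun p hp => ⟨(hsub hp).1, ht p (hN k hk p hp)⟩).symm, ?_⟩
  rintro rfl
  exact hseg

/-- Minimal revision with the uniform prior identifies in the limit every
state of a space that has a definite finite tell-tale map. -/
theorem mini_universal_on_finitely_identifiable {W : Type*} (O : Set (Set W))
    (hsep : Separating O)
    (D : W → Set (Set W)) (hD : DFTTMap O D) :
    ∀ s : W, IdentifiesInLimit O (miniLearner (fun _ _ : W => True)) s :=
  mini_universal_on_finitely_identifiable_general O D hD

end Epi
end

section
/- Let ≼ be a total preorder on an epistemic space, s a state, and p ∈ O_s an observable such that s ∈ min_≼ p. Then for any finite initial segment of a data stream sound with respect to s, after iterated minimal revision along that segment, s is still a minimal element of p in the revised order. -/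
namespace Epi

variable {W : Type*}

lemma miniRev_total {R : W → W → Prop} (hR : TotalPreorderOn R) (q : Set W) :
    TotalPreorderOn (miniRev R q) := by
  obtain ⟨hrefl, htrans, htot⟩ := hR
  refine ⟨?_, ?_, ?_⟩
  · intro a
    exact Or.inr ⟨hrefl a, fun ⟨h1, h2⟩ => h2 h1⟩
  · rintro a b c (⟨haM, hbM⟩ | ⟨hab, hnb⟩) (⟨hbM', hcM⟩ | ⟨hbc, hnc⟩)
    · exact absurd hbM' hbM
    · exact Or.inl ⟨haM, fun hcM => hnc ⟨hcM, hbM⟩⟩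
    · exact Or.inl ⟨by_contra fun haM => hnb ⟨hbM', haM⟩, hcM⟩
    · exact Or.inr ⟨htrans hab hbc, fun ⟨hcM, haM⟩ => hnb ⟨by_contra fun hbM => hnc ⟨hcM, hbM⟩, haM⟩⟩
  · intro a b
    by_cases haM : a ∈ minIn R q
    · by_cases hbM : b ∈ minIn R q
      · rcases htot a b with h | h
        · exact Or.inl (Or.inr ⟨h, fun ⟨_, h2⟩ => h2 haM⟩)
        · exact Or.inr (Or.inr ⟨h, fun ⟨_, h2⟩ => h2 hbM⟩)
      · exact Or.inl (Or.inl ⟨haM, hbM⟩)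
    · by_cases hbM : b ∈ minIn R q
      · exact Or.inr (Or.inl ⟨hbM, haM⟩)
      · rcases htot a b with h | h
        · exact Or.inl (Or.inr ⟨h, fun ⟨h1, _⟩ => hbM h1⟩)
        · exact Or.inr (Or.inr ⟨h, fun ⟨h1, _⟩ => haM h1⟩)

lemma miniRev_min_persists {R : W → W → Prop} (hR : TotalPreorderOn R)
    {s : W} {p q : Set W} (hmin : s ∈ minIn R p) (hsq : s ∈ q) :
    s ∈ minIn (miniRev R q) p := by
  obtain ⟨hrefl, htrans, htot⟩ := hR
  obtain ⟨hsp, hmins⟩ := hmin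
  refine ⟨hsp, fun t htp _ => ?_⟩
  have hst : R s t := hmins t htp (htot s t)
  by_cases hsM : s ∈ minIn R q
  · by_cases htM : t ∈ minIn R q
    · exact Or.inr ⟨hst, fun ⟨_, h2⟩ => h2 hsM⟩
    · exact Or.inl ⟨hsM, htM⟩
  · refine Or.inr ⟨hst, fun ⟨htM, _⟩ => ?_⟩
    -- s ∉ minIn R q means some u ∈ q with ¬ R s u
    have : ∃ u ∈ q, ¬ R s u := by
      by_contra h
      push_neg at h
      exact hsM ⟨hsq, fun u hu _ => h u hu⟩
    obtain ⟨u, huq, hnsu⟩ := this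
    exact hnsu (htrans hst (htM.2 u huq (htot t u)))

lemma iter_min_persists {s : W} {p : Set W} :
    ∀ (σ : List (Set W)) (R : W → W → Prop), TotalPreorderOn R →
      s ∈ minIn R p → (∀ q ∈ σ, s ∈ q) →
      s ∈ minIn (iterRev miniRev R σ) p := by
  intro σ
  induction σ with
  | nil => intro R _ hmin _; exact hmin
  | cons q σ ih =>
      intro R hR hmin hall
      exact ih (miniRev R q) (miniRev_total hR q)
        (miniRev_min_persists hR hmin (hall q List.mem_cons_self))
        (fun r hr => hall r (List.mem_cons_of_mem q hr))

/-- If `s` is minimal in `p ∈ O_s`, it stays minimal in `p` under iterated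
minimal revision along any sound stream. -/
theorem mini_minimality_in_p_persists {W : Type*} (O : Set (Set W))
    (R : W → W → Prop) (hR : TotalPreorderOn R)
    (s : W) (p : Set W) (hp : p ∈ obsAt O s) (hmin : s ∈ minIn R p)
    (f : ℕ → Set W) (hin : StreamIn O f) (hsound : SoundStream s f) :
    ∀ n : ℕ, s ∈ minIn (iterRev miniRev R (seg f n)) p := by
  intro n
  refine iter_min_persists _ R hR hmin ?_
  intro q hq
  simp only [seg, List.mem_map, List.mem_range] at hq
  obtain ⟨k, _, rfl⟩ := hq
  exact hsound k

end Epi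
end

section
/- Minimal revision is not universal on fair data streams over finite negation-closed epistemic spaces: there exists a finite negation-closed epistemic space (four states, observables p, p̄, q, q̄ with each state satisfying one of each complementary pair) such that no prior plausibility order makes the canonical learning method induced by minimal revision identify every state in the limit on all fair data streams. -/
namespace Epi

variable {W : Type*}

section Aux
variable {R T : W → W → Prop} {p X : Set W} {s t u x y : W}

lemma mem_minIn : s ∈ minIn R X ↔ s ∈ X ∧ ∀ t ∈ X, (R s t ∨ R t s) → R s t := Iff.rfl

lemma minIn_subset : minIn R X ⊆ X := fun _ h => h.1

lemma tpo_miniRev (h : TotalPreorderOn R) (p : Set W) : TotalPreorderOn (miniRev R p) := by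
  obtain ⟨hr, ht, hto⟩ := h
  refine ⟨fun s => Or.inr ⟨hr s, fun ⟨h1, h2⟩ => h2 h1⟩, ?_, ?_⟩
  · rintro s t u hst htu
    by_cases hs : s ∈ minIn R p
    · by_cases hu : u ∈ minIn R p
      · exact Or.inr ⟨hs.2 u (minIn_subset hu) (hto s u), fun ⟨_, h2⟩ => h2 hs⟩
      · exact Or.inl ⟨hs, hu⟩
    · rcases hst with ⟨h1, _⟩ | ⟨h1, h2⟩
      · exact absurd h1 hs
      · have htm : t ∉ minIn R p := fun htm => h2 ⟨htm, hs⟩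
        rcases htu with ⟨h3, _⟩ | ⟨h3, h4⟩
        · exact absurd h3 htm
        · have hum : u ∉ minIn R p := fun hum => h4 ⟨hum, htm⟩
          exact Or.inr ⟨ht h1 h3, fun ⟨h5, _⟩ => hum h5⟩
  · intro s t
    by_cases hs : s ∈ minIn R p <;> by_cases htm : t ∈ minIn R p
    · rcases hto s t with h | h
      · exact Or.inl (Or.inr ⟨h, fun ⟨_, h2⟩ => h2 hs⟩)
      · exact Or.inr (Or.inr ⟨h, fun ⟨_, h2⟩ => h2 htm⟩)
    · exact Or.inl (Or.inl ⟨hs, htm⟩)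
    · exact Or.inr (Or.inl ⟨htm, hs⟩)
    · rcases hto s t with h | h
      · exact Or.inl (Or.inr ⟨h, fun ⟨h1, _⟩ => htm h1⟩)
      · exact Or.inr (Or.inr ⟨h, fun ⟨h1, _⟩ => hs h1⟩)

lemma miniRev_strict (hs : s ∈ minIn R p) (ht : t ∉ minIn R p) :
    strictR (miniRev R p) s t := by
  refine ⟨Or.inl ⟨hs, ht⟩, ?_⟩
  rintro (⟨h1, _⟩ | ⟨_, h2⟩)
  · exact ht h1
  · exact h2 ⟨hs, ht⟩

lemma miniRev_iff_not_mem (hs : s ∉ minIn R p) (ht : t ∉ minIn R p) :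
    miniRev R p s t ↔ R s t := by
  constructor
  · rintro (⟨h1, _⟩ | ⟨h1, _⟩)
    exacts [absurd h1 hs, h1]
  · intro h; exact Or.inr ⟨h, fun ⟨h1, _⟩ => ht h1⟩

lemma strict_pres (h : strictR R s t) (ht : t ∉ minIn R p) :
    strictR (miniRev R p) s t := by
  by_cases hs : s ∈ minIn R p
  · exact miniRev_strict hs ht
  · exact ⟨(miniRev_iff_not_mem hs ht).2 h.1, fun hc => h.2 ((miniRev_iff_not_mem ht hs).1 hc)⟩

lemma minIn_univ_miniRev (h : TotalPreorderOn R) (hne : s ∈ minIn R p) :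
    minIn (miniRev R p) Set.univ = minIn R p := by
  ext t
  constructor
  · intro htm
    by_contra htp
    have h2 := htm.2 s (Set.mem_univ s) (Or.inr (Or.inl ⟨hne, htp⟩))
    exact (miniRev_strict hne htp).2 h2
  · intro htp
    refine ⟨Set.mem_univ t, fun u _ _ => ?_⟩
    by_cases hu : u ∈ minIn R p
    · exact Or.inr ⟨htp.2 u (minIn_subset hu) (h.2.2 t u), fun ⟨_, h2⟩ => h2 htp⟩
    · exact Or.inl ⟨htp, hu⟩

lemma minIn_pair (h : TotalPreorderOn R) (hxy : R x y) (hyx : ¬ R y x) :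
    minIn R ({x, y} : Set W) = {x} := by
  ext t
  simp only [mem_minIn, Set.mem_insert_iff, Set.mem_singleton_iff]
  constructor
  · rintro ⟨(rfl | rfl), h2⟩
    · rfl
    · exact absurd (h2 x (Or.inl rfl) (Or.inr hxy)) hyx
  · rintro rfl
    refine ⟨Or.inl rfl, fun u hu _ => ?_⟩
    rcases hu with rfl | rfl
    · exact h.1 _
    · exact hxy

lemma minIn_pair_both (h : TotalPreorderOn R) (hxy : R x y) (hyx : R y x) :
    minIn R ({x, y} : Set W) = {x, y} := by
  ext t
  simp only [mem_minIn, Set.mem_insert_iff, Set.mem_singleton_iff]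
  constructor
  · exact fun h => h.1
  · rintro (rfl | rfl)
    · exact ⟨Or.inl rfl, fun u hu _ => by rcases hu with rfl | rfl; exacts [h.1 _, hxy]⟩
    · exact ⟨Or.inr rfl, fun u hu _ => by rcases hu with rfl | rfl; exacts [hyx, h.1 _]⟩

lemma strict_of_minIn_univ (h : TotalPreorderOn R) (hmin : minIn R Set.univ = {x})
    (hne : t ≠ x) : strictR R x t := by
  have hx : x ∈ minIn R Set.univ := by rw [hmin]; rfl
  have hxt : R x t := hx.2 t (Set.mem_univ t) (h.2.2 x t)
  refine ⟨hxt, fun htx => hne ?_⟩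
  have : t ∈ minIn R Set.univ :=
    ⟨Set.mem_univ t, fun u _ _ => h.2.1 htx (hx.2 u (Set.mem_univ u) (h.2.2 x u))⟩
  rw [hmin] at this; exact this

lemma iterRev_append (rev : (W → W → Prop) → Set W → (W → W → Prop))
    (R : W → W → Prop) (σ τ : List (Set W)) :
    iterRev rev R (σ ++ τ) = iterRev rev (iterRev rev R σ) τ :=
  List.foldl_append

lemma seg_succ (f : ℕ → Set W) (k : ℕ) : seg f (k + 1) = seg f k ++ [f k] := by
  simp [seg, List.range_succ]

lemma orderAt_succ (f : ℕ → Set W) (R : W → W → Prop) (k : ℕ) :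
    iterRev miniRev R (seg f (k + 1)) = miniRev (iterRev miniRev R (seg f k)) (f k) := by
  rw [seg_succ, iterRev_append]; rfl

lemma tpo_iterRev (h : TotalPreorderOn R) (σ : List (Set W)) :
    TotalPreorderOn (iterRev miniRev R σ) := by
  induction σ generalizing R with
  | nil => exact h
  | cons a σ ih => exact ih (tpo_miniRev h a)

lemma seg_congr {f g : ℕ → Set W} (m : ℕ) (h : ∀ i < m, f i = g i) : seg f m = seg g m := by
  simp only [seg]
  exact List.map_congr_left (by simpa using h)

end Aux

section Osc
variable {R : W → W → Prop} {u x y : W} {A B : Set W}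

/-- One period of the 2-periodic adversarial tail. -/
lemma osc_step (hA : A = ({x, y} : Set W)) (hB : B = ({u, y} : Set W))
    (T : W → W → Prop) (hT : TotalPreorderOn T)
    (huy : strictR T u y) (hxy : strictR T x y) :
    minIn (miniRev T A) Set.univ = {x} ∧
      TotalPreorderOn (miniRev (miniRev T A) B) ∧
      strictR (miniRev (miniRev T A) B) u y ∧
      strictR (miniRev (miniRev T A) B) x y := by
  have hyx : y ≠ x := fun h => hxy.2 (h ▸ hT.1 x)
  have hyu : y ≠ u := fun h => huy.2 (h ▸ hT.1 u)
  have hMA : minIn T A = {x} := by rw [hA]; exact minIn_pair hT hxy.1 hxy.2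
  have hxA : x ∈ minIn T A := by rw [hMA]; rfl
  have hyA : y ∉ minIn T A := by rw [hMA]; exact hyx
  have h1 : minIn (miniRev T A) Set.univ = {x} := (minIn_univ_miniRev hT hxA).trans hMA
  have hT1 : TotalPreorderOn (miniRev T A) := tpo_miniRev hT A
  have huy1 : strictR (miniRev T A) u y := strict_pres huy hyA
  have hxy1 : strictR (miniRev T A) x y := strict_pres hxy hyA
  have hMB : minIn (miniRev T A) B = {u} := by rw [hB]; exact minIn_pair hT1 huy1.1 huy1.2
  have hyB : y ∉ minIn (miniRev T A) B := by rw [hMB]; exact hyu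
  exact ⟨h1, tpo_miniRev hT1 B, strict_pres huy1 hyB, strict_pres hxy1 hyB⟩

/-- On a stream whose tail from `m` alternates `A, B, A, B, …`, if at stage `m` the
order has `u` and `x` strictly below `y` (where `A = {x,y}`, `B = {u,y}`), then the
conjecture at every stage `m + 2j + 1` is `{x}`. -/
lemma osc_conj (hA : A = ({x, y} : Set W)) (hB : B = ({u, y} : Set W))
    (f : ℕ → Set W) (m : ℕ)
    (hfA : ∀ j, f (m + 2 * j) = A) (hfB : ∀ j, f (m + 2 * j + 1) = B)
    (hT : TotalPreorderOn (iterRev miniRev R (seg f m)))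
    (huy : strictR (iterRev miniRev R (seg f m)) u y)
    (hxy : strictR (iterRev miniRev R (seg f m)) x y) :
    ∀ j, miniLearner R (seg f (m + 2 * j + 1)) = {x} := by
  have inv : ∀ j, TotalPreorderOn (iterRev miniRev R (seg f (m + 2 * j))) ∧
      strictR (iterRev miniRev R (seg f (m + 2 * j))) u y ∧
      strictR (iterRev miniRev R (seg f (m + 2 * j))) x y := by
    intro j
    induction j with
    | zero => simpa using ⟨hT, huy, hxy⟩
    | succ j ih =>
      have e : m + 2 * (j + 1) = (m + 2 * j + 1) + 1 := by ring
      rw [e, orderAt_succ, orderAt_succ, hfA j, hfB j]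
      exact (osc_step hA hB _ ih.1 ih.2.1 ih.2.2).2
  intro j
  obtain ⟨h1, h2, h3⟩ := inv j
  show minIn (iterRev miniRev R (seg f (m + 2 * j + 1))) Set.univ = {x}
  rw [orderAt_succ, hfA j]
  exact (osc_step hA hB _ h1 h2 h3).1

/-- On a stream whose tail from `m` is constantly `B = {u,y}`, if at stage `m` the order
has `u` strictly below `y`, the conjecture at every stage `m + j + 1` is `{u}`. -/
lemma const_conj (hB : B = ({u, y} : Set W)) (f : ℕ → Set W) (m : ℕ)
    (hfB : ∀ j, f (m + j) = B)
    (hT : TotalPreorderOn (iterRev miniRev R (seg f m)))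
    (huy : strictR (iterRev miniRev R (seg f m)) u y) :
    ∀ j, miniLearner R (seg f (m + j + 1)) = {u} := by
  have hyu : y ≠ u := fun h => huy.2 (h ▸ hT.1 u)
  have inv : ∀ j, TotalPreorderOn (iterRev miniRev R (seg f (m + j))) ∧
      strictR (iterRev miniRev R (seg f (m + j))) u y := by
    intro j
    induction j with
    | zero => simpa using ⟨hT, huy⟩
    | succ j ih =>
      have e : m + (j + 1) = (m + j) + 1 := by ring
      rw [e, orderAt_succ, hfB j]
      have hMB : minIn (iterRev miniRev R (seg f (m + j))) B = {u} := by
        rw [hB]; exact minIn_pair ih.1 ih.2.1 ih.2.2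
      have hyB : y ∉ minIn (iterRev miniRev R (seg f (m + j))) B := by
        rw [hMB]; exact hyu
      exact ⟨tpo_miniRev ih.1 B, strict_pres ih.2 hyB⟩
  intro j
  obtain ⟨h1, h2⟩ := inv j
  show minIn (iterRev miniRev R (seg f (m + j + 1))) Set.univ = {u}
  have e : m + j + 1 = (m + j) + 1 := rfl
  rw [e, orderAt_succ, hfB j]
  have hMB : minIn (iterRev miniRev R (seg f (m + j))) B = {u} := by
    rw [hB]; exact minIn_pair h1 h2.1 h2.2
  have huB : u ∈ minIn (iterRev miniRev R (seg f (m + j))) B := by rw [hMB]; rfl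
  exact (minIn_univ_miniRev h1 huB).trans hMB

end Osc

section Concrete

def Pa : Set (Bool × Bool) := {w | w.1 = true}
def Qa : Set (Bool × Bool) := {w | w.2 = true}
def Osp : Set (Set (Bool × Bool)) := {Pa, Paᶜ, Qa, Qaᶜ}
def sa : Bool × Bool := (true, true)
def sb : Bool × Bool := (true, false)
def sc : Bool × Bool := (false, true)
def sd : Bool × Bool := (false, false)

lemma mem_a_P : sa ∈ Pa := rfl
lemma mem_b_P : sb ∈ Pa := rfl
lemma mem_a_Q : sa ∈ Qa := rfl
lemma mem_c_Q : sc ∈ Qa := rfl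
lemma mem_c_Pc : sc ∈ Paᶜ := by simp [Pa, sc]
lemma mem_d_Pc : sd ∈ Paᶜ := by simp [Pa, sd]
lemma mem_b_Qc : sb ∈ Qaᶜ := by simp [Qa, sb]
lemma mem_d_Qc : sd ∈ Qaᶜ := by simp [Qa, sd]
lemma not_b_Q : sb ∉ Qa := by simp [Qa, sb]
lemma not_c_P : sc ∉ Pa := by simp [Pa, sc]
lemma not_d_P : sd ∉ Pa := by simp [Pa, sd]
lemma not_d_Q : sd ∉ Qa := by simp [Qa, sd]
lemma not_a_Pc : sa ∉ Paᶜ := fun h => h mem_a_P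
lemma not_a_Qc : sa ∉ Qaᶜ := fun h => h mem_a_Q
lemma not_b_Pc : sb ∉ Paᶜ := fun h => h mem_b_P
lemma not_c_Qc : sc ∉ Qaᶜ := fun h => h mem_c_Q

lemma P_pair : Pa = ({sa, sb} : Set (Bool × Bool)) := by
  ext ⟨x, y⟩; cases x <;> cases y <;> simp [Pa, sa, sb, Prod.ext_iff]
lemma Q_pair : Qa = ({sa, sc} : Set (Bool × Bool)) := by
  ext ⟨x, y⟩; cases x <;> cases y <;> simp [Qa, sa, sc, Prod.ext_iff]
lemma Pc_pair : Paᶜ = ({sd, sc} : Set (Bool × Bool)) := by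
  ext ⟨x, y⟩; cases x <;> cases y <;> simp [Pa, sd, sc, Prod.ext_iff]
lemma Pc_pair' : Paᶜ = ({sc, sd} : Set (Bool × Bool)) := by
  ext ⟨x, y⟩; cases x <;> cases y <;> simp [Pa, sd, sc, Prod.ext_iff]
lemma Qc_pair : Qaᶜ = ({sd, sb} : Set (Bool × Bool)) := by
  ext ⟨x, y⟩; cases x <;> cases y <;> simp [Qa, sd, sb, Prod.ext_iff]
lemma Qc_pair' : Qaᶜ = ({sb, sd} : Set (Bool × Bool)) := by
  ext ⟨x, y⟩; cases x <;> cases y <;> simp [Qa, sd, sb, Prod.ext_iff]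

lemma P_in : Pa ∈ Osp := by simp [Osp]
lemma Pc_in : Paᶜ ∈ Osp := by simp [Osp]
lemma Q_in : Qa ∈ Osp := by simp [Osp]
lemma Qc_in : Qaᶜ ∈ Osp := by simp [Osp]

lemma obs_elim {s : Bool × Bool} {r : Set (Bool × Bool)} (hr : r ∈ obsAt Osp s) :
    (r = Pa ∧ s ∈ Pa) ∨ (r = Paᶜ ∧ s ∈ Paᶜ) ∨ (r = Qa ∧ s ∈ Qa) ∨ (r = Qaᶜ ∧ s ∈ Qaᶜ) := by
  obtain ⟨hO, hm⟩ := hr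
  simp only [Osp, Set.mem_insert_iff, Set.mem_singleton_iff] at hO
  rcases hO with rfl | rfl | rfl | rfl
  · exact Or.inl ⟨rfl, hm⟩
  · exact Or.inr (Or.inl ⟨rfl, hm⟩)
  · exact Or.inr (Or.inr (Or.inl ⟨rfl, hm⟩))
  · exact Or.inr (Or.inr (Or.inr ⟨rfl, hm⟩))

/-- The base (sound and complete) stream for `sa`. -/
def gab : ℕ → Set (Bool × Bool) := fun k => if k % 2 = 0 then Pa else Qa

lemma gab_val (k : ℕ) : gab k = Pa ∨ gab k = Qa := by
  by_cases h : k % 2 = 0 <;> simp [gab, h]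

lemma sa_gab (k : ℕ) : sa ∈ gab k := by
  rcases gab_val k with h | h <;> rw [h]
  exacts [mem_a_P, mem_a_Q]

lemma gab_in : StreamIn Osp gab := by
  intro k; rcases gab_val k with h | h <;> rw [h]
  exacts [P_in, Q_in]

lemma gab_fair : FairStream Osp sa gab := by
  refine ⟨?_, ⟨0, fun k _ => sa_gab k⟩, fun i hi => absurd (sa_gab i) hi⟩
  intro r hr
  rcases obs_elim hr with ⟨rfl, h⟩ | ⟨rfl, h⟩ | ⟨rfl, h⟩ | ⟨rfl, h⟩
  · exact ⟨0, by simp [gab]⟩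
  · exact absurd h not_a_Pc
  · exact ⟨1, by simp [gab]⟩
  · exact absurd h not_a_Qc

/-- Stream with prefix `gab` up to `m` and tail `h`. -/
def spl (m : ℕ) (h : ℕ → Set (Bool × Bool)) : ℕ → Set (Bool × Bool) :=
  fun k => if k < m then gab k else h (k - m)

lemma spl_lt {m : ℕ} {h : ℕ → Set (Bool × Bool)} {k : ℕ} (hk : k < m) :
    spl m h k = gab k := if_pos hk

lemma spl_ge (m : ℕ) (h : ℕ → Set (Bool × Bool)) (j : ℕ) : spl m h (m + j) = h j := by
  have h1 : ¬ m + j < m := by omega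
  simp [spl, h1]

lemma seg_spl (m : ℕ) (h : ℕ → Set (Bool × Bool)) : seg (spl m h) m = seg gab m :=
  seg_congr m fun _ hi => spl_lt hi

lemma streamIn_spl {m : ℕ} {h : ℕ → Set (Bool × Bool)} (hh : ∀ j, h j ∈ Osp) :
    StreamIn Osp (spl m h) := by
  intro n
  by_cases hn : n < m
  · rw [spl_lt hn]; exact gab_in n
  · have e : n = m + (n - m) := by omega
    rw [e, spl_ge]; exact hh _

lemma fair_spl {s : Bool × Bool} {m : ℕ} {h : ℕ → Set (Bool × Bool)}
    (hcomp : ∀ r ∈ obsAt Osp s, ∃ j, h j = r)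
    (hsound : ∃ n, ∀ j, n ≤ j → s ∈ h j)
    (hcorr : ∀ j, s ∉ h j → ∃ k, j < k ∧ h k = (h j)ᶜ)
    (hgcorr : ∀ i < m, s ∉ gab i → ∃ j, h j = (gab i)ᶜ) :
    FairStream Osp s (spl m h) := by
  refine ⟨?_, ?_, ?_⟩
  · intro r hr
    obtain ⟨j, hj⟩ := hcomp r hr
    exact ⟨m + j, by rw [spl_ge]; exact hj⟩
  · obtain ⟨n, hn⟩ := hsound
    refine ⟨m + n, fun k hk => ?_⟩
    have e : k = m + (k - m) := by omega
    rw [e, spl_ge]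
    exact hn _ (by omega)
  · intro i hi
    by_cases him : i < m
    · rw [spl_lt him] at hi
      obtain ⟨j, hj⟩ := hgcorr i him hi
      refine ⟨m + j, by omega, ?_⟩
      rw [spl_ge, spl_lt him]
      exact hj
    · have e : i = m + (i - m) := by omega
      rw [e, spl_ge] at hi
      obtain ⟨k, hk1, hk2⟩ := hcorr _ hi
      refine ⟨m + k, by omega, ?_⟩
      rw [spl_ge, e, spl_ge]
      exact hk2

/-- Alternating tail. -/
def alt (A B : Set (Bool × Bool)) : ℕ → Set (Bool × Bool) := fun i => if i % 2 = 0 then A else B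

lemma alt_even (A B : Set (Bool × Bool)) (j : ℕ) : alt A B (2 * j) = A := by
  simp [alt, Nat.mul_mod_right]

lemma alt_odd (A B : Set (Bool × Bool)) (j : ℕ) : alt A B (2 * j + 1) = B := by
  have h1 : (2 * j + 1) % 2 = 1 := by omega
  simp [alt, h1]

lemma alt_val (A B : Set (Bool × Bool)) (j : ℕ) : alt A B j = A ∨ alt A B j = B := by
  by_cases h : j % 2 = 0 <;> simp [alt, h]

end Concrete

section Main

lemma nmem_c_bd : sc ∉ ({sb, sd} : Set (Bool × Bool)) := by
  simp only [Set.mem_insert_iff, Set.mem_singleton_iff]; decide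
lemma nmem_c_d : sc ∉ ({sd} : Set (Bool × Bool)) := by
  simp only [Set.mem_singleton_iff]; decide
lemma nmem_b_cd : sb ∉ ({sc, sd} : Set (Bool × Bool)) := by
  simp only [Set.mem_insert_iff, Set.mem_singleton_iff]; decide
lemma nmem_b_d : sb ∉ ({sd} : Set (Bool × Bool)) := by
  simp only [Set.mem_singleton_iff]; decide
lemma mem_d_bd : sd ∈ ({sb, sd} : Set (Bool × Bool)) :=
  Set.mem_insert_iff.mpr (Or.inr rfl)
lemma mem_d_cd : sd ∈ ({sc, sd} : Set (Bool × Bool)) :=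
  Set.mem_insert_iff.mpr (Or.inr rfl)

/-- Conjectures along an alternating adversarial tail. -/
lemma scenario_osc (R : Bool × Bool → Bool × Bool → Prop) (hR : TotalPreorderOn R) (m : ℕ)
    {u x y : Bool × Bool} {A B : Set (Bool × Bool)}
    (hA : A = ({x, y} : Set (Bool × Bool))) (hB : B = ({u, y} : Set (Bool × Bool)))
    (huy : strictR (iterRev miniRev R (seg gab m)) u y)
    (hxy : strictR (iterRev miniRev R (seg gab m)) x y) :
    ∀ j, miniLearner R (seg (spl m (alt A B)) (m + 2 * j + 1)) = {x} := by
  have hfA : ∀ j, spl m (alt A B) (m + 2 * j) = A := fun j => by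
    rw [spl_ge]; exact alt_even A B j
  have hfB : ∀ j, spl m (alt A B) (m + 2 * j + 1) = B := fun j => by
    have e : m + 2 * j + 1 = m + (2 * j + 1) := by ring
    rw [e, spl_ge]; exact alt_odd A B j
  have hseg := seg_spl m (alt A B)
  exact osc_conj hA hB _ m hfA hfB (by rw [hseg]; exact tpo_iterRev hR _)
    (by rw [hseg]; exact huy) (by rw [hseg]; exact hxy)

def tail4 : ℕ → Set (Bool × Bool) := fun i => if i = 0 then Qaᶜ else if i = 1 then Paᶜ else Qa
def tail5 : ℕ → Set (Bool × Bool) := fun i => if i = 0 then Paᶜ else if i = 1 then Qaᶜ else Pa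

lemma tail4_0 : tail4 0 = Qaᶜ := rfl
lemma tail4_1 : tail4 1 = Paᶜ := rfl
lemma tail4_ge {j : ℕ} (hj : 2 ≤ j) : tail4 j = Qa := by
  have h1 : j ≠ 0 := by omega
  have h2 : j ≠ 1 := by omega
  simp [tail4, h1, h2]
lemma tail5_0 : tail5 0 = Paᶜ := rfl
lemma tail5_1 : tail5 1 = Qaᶜ := rfl
lemma tail5_ge {j : ℕ} (hj : 2 ≤ j) : tail5 j = Pa := by
  have h1 : j ≠ 0 := by omega
  have h2 : j ≠ 1 := by omega
  simp [tail5, h1, h2]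

lemma key : ¬ ∃ R : Bool × Bool → Bool × Bool → Prop, TotalPreorderOn R ∧
    ∀ s : Bool × Bool, ∀ f : ℕ → Set (Bool × Bool),
      StreamIn Osp f → FairStream Osp s f →
        ∃ n, ∀ k, n ≤ k → miniLearner R (seg f k) = {s} := by
  rintro ⟨R, hR, H⟩
  obtain ⟨m, hm⟩ := H sa gab gab_in gab_fair
  have hRm : TotalPreorderOn (iterRev miniRev R (seg gab m)) := tpo_iterRev hR _
  have hmin : minIn (iterRev miniRev R (seg gab m)) Set.univ = {sa} := hm m le_rfl
  have sab : strictR (iterRev miniRev R (seg gab m)) sa sb :=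
    strict_of_minIn_univ hRm hmin (by decide)
  have sac : strictR (iterRev miniRev R (seg gab m)) sa sc :=
    strict_of_minIn_univ hRm hmin (by decide)
  -- Step 1: b must be weakly below d.
  have hbd : iterRev miniRev R (seg gab m) sb sd := by
    by_contra hn
    have sdb : strictR (iterRev miniRev R (seg gab m)) sd sb :=
      ⟨(hRm.2.2 sb sd).resolve_left hn, hn⟩
    have hosc := scenario_osc R hR m Qc_pair P_pair sab sdb
    have hin : StreamIn Osp (spl m (alt Qaᶜ Pa)) := by
      refine streamIn_spl fun j => ?_
      rcases alt_val Qaᶜ Pa j with h | h <;> rw [h]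
      exacts [Qc_in, P_in]
    have hfair : FairStream Osp sb (spl m (alt Qaᶜ Pa)) := by
      refine fair_spl ?_ ?_ ?_ ?_
      · intro r hr
        rcases obs_elim hr with ⟨rfl, h2⟩ | ⟨rfl, h2⟩ | ⟨rfl, h2⟩ | ⟨rfl, h2⟩
        · exact ⟨1, by simpa using alt_odd Qaᶜ Pa 0⟩
        · exact absurd h2 not_b_Pc
        · exact absurd h2 not_b_Q
        · exact ⟨0, by simpa using alt_even Qaᶜ Pa 0⟩
      · refine ⟨0, fun j _ => ?_⟩
        rcases alt_val Qaᶜ Pa j with h | h <;> rw [h]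
        exacts [mem_b_Qc, mem_b_P]
      · intro j hj
        exfalso
        rcases alt_val Qaᶜ Pa j with h | h <;> rw [h] at hj
        exacts [hj mem_b_Qc, hj mem_b_P]
      · intro i _ hi
        have hgi : gab i = Qa := by
          rcases gab_val i with h | h
          · rw [h] at hi; exact absurd mem_b_P hi
          · exact h
        exact ⟨0, by rw [hgi]; simpa using alt_even Qaᶜ Pa 0⟩
    obtain ⟨n, hn2⟩ := H sb _ hin hfair
    have h1 := hn2 (m + 2 * n + 1) (by omega)
    rw [hosc n] at h1
    exact absurd (Set.singleton_eq_singleton_iff.mp h1) (by decide)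
  -- Step 2: c must be weakly below d.
  have hcd : iterRev miniRev R (seg gab m) sc sd := by
    by_contra hn
    have sdc : strictR (iterRev miniRev R (seg gab m)) sd sc :=
      ⟨(hRm.2.2 sc sd).resolve_left hn, hn⟩
    have hosc := scenario_osc R hR m Pc_pair Q_pair sac sdc
    have hin : StreamIn Osp (spl m (alt Paᶜ Qa)) := by
      refine streamIn_spl fun j => ?_
      rcases alt_val Paᶜ Qa j with h | h <;> rw [h]
      exacts [Pc_in, Q_in]
    have hfair : FairStream Osp sc (spl m (alt Paᶜ Qa)) := by
      refine fair_spl ?_ ?_ ?_ ?_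
      · intro r hr
        rcases obs_elim hr with ⟨rfl, h2⟩ | ⟨rfl, h2⟩ | ⟨rfl, h2⟩ | ⟨rfl, h2⟩
        · exact absurd h2 not_c_P
        · exact ⟨0, by simpa using alt_even Paᶜ Qa 0⟩
        · exact ⟨1, by simpa using alt_odd Paᶜ Qa 0⟩
        · exact absurd h2 not_c_Qc
      · refine ⟨0, fun j _ => ?_⟩
        rcases alt_val Paᶜ Qa j with h | h <;> rw [h]
        exacts [mem_c_Pc, mem_c_Q]
      · intro j hj
        exfalso
        rcases alt_val Paᶜ Qa j with h | h <;> rw [h] at hj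
        exacts [hj mem_c_Pc, hj mem_c_Q]
      · intro i _ hi
        have hgi : gab i = Pa := by
          rcases gab_val i with h | h
          · exact h
          · rw [h] at hi; exact absurd mem_c_Q hi
        exact ⟨0, by rw [hgi]; simpa using alt_even Paᶜ Qa 0⟩
    obtain ⟨n, hn2⟩ := H sc _ hin hfair
    have h1 := hn2 (m + 2 * n + 1) (by omega)
    rw [hosc n] at h1
    exact absurd (Set.singleton_eq_singleton_iff.mp h1) (by decide)
  -- Step 3: d must be weakly below b or weakly below c.
  have hor : iterRev miniRev R (seg gab m) sd sb ∨ iterRev miniRev R (seg gab m) sd sc := by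
    by_contra hn
    push_neg at hn
    have sbd : strictR (iterRev miniRev R (seg gab m)) sb sd := ⟨hbd, hn.1⟩
    have scd : strictR (iterRev miniRev R (seg gab m)) sc sd := ⟨hcd, hn.2⟩
    have hosc := scenario_osc R hR m Pc_pair' Qc_pair' sbd scd
    have hin : StreamIn Osp (spl m (alt Paᶜ Qaᶜ)) := by
      refine streamIn_spl fun j => ?_
      rcases alt_val Paᶜ Qaᶜ j with h | h <;> rw [h]
      exacts [Pc_in, Qc_in]
    have hfair : FairStream Osp sd (spl m (alt Paᶜ Qaᶜ)) := by
      refine fair_spl ?_ ?_ ?_ ?_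
      · intro r hr
        rcases obs_elim hr with ⟨rfl, h2⟩ | ⟨rfl, h2⟩ | ⟨rfl, h2⟩ | ⟨rfl, h2⟩
        · exact absurd h2 not_d_P
        · exact ⟨0, by simpa using alt_even Paᶜ Qaᶜ 0⟩
        · exact absurd h2 not_d_Q
        · exact ⟨1, by simpa using alt_odd Paᶜ Qaᶜ 0⟩
      · refine ⟨0, fun j _ => ?_⟩
        rcases alt_val Paᶜ Qaᶜ j with h | h <;> rw [h]
        exacts [mem_d_Pc, mem_d_Qc]
      · intro j hj
        exfalso
        rcases alt_val Paᶜ Qaᶜ j with h | h <;> rw [h] at hj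
        exacts [hj mem_d_Pc, hj mem_d_Qc]
      · intro i _ _
        rcases gab_val i with h | h
        · exact ⟨0, by rw [h]; simpa using alt_even Paᶜ Qaᶜ 0⟩
        · exact ⟨1, by rw [h]; simpa using alt_odd Paᶜ Qaᶜ 0⟩
    obtain ⟨n, hn2⟩ := H sd _ hin hfair
    have h1 := hn2 (m + 2 * n + 1) (by omega)
    rw [hosc n] at h1
    exact absurd (Set.singleton_eq_singleton_iff.mp h1) (by decide)
  rcases hor with hdb | hdc
  -- Case A: b and d equiplausible; kill it with a stream for c.
  · have hA0 : minIn (iterRev miniRev R (seg gab m)) Qaᶜ = {sb, sd} := by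
      rw [Qc_pair']; exact minIn_pair_both hRm hbd hdb
    have hT1 : TotalPreorderOn (miniRev (iterRev miniRev R (seg gab m)) Qaᶜ) :=
      tpo_miniRev hRm _
    have hscd1 : strictR (miniRev (iterRev miniRev R (seg gab m)) Qaᶜ) sd sc :=
      miniRev_strict (by rw [hA0]; exact mem_d_bd) (by rw [hA0]; exact nmem_c_bd)
    have hsac1 : strictR (miniRev (iterRev miniRev R (seg gab m)) Qaᶜ) sa sc :=
      strict_pres sac (by rw [hA0]; exact nmem_c_bd)
    have hM1 : minIn (miniRev (iterRev miniRev R (seg gab m)) Qaᶜ) Paᶜ = {sd} := by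
      rw [Pc_pair]; exact minIn_pair hT1 hscd1.1 hscd1.2
    have hsac2 : strictR (miniRev (miniRev (iterRev miniRev R (seg gab m)) Qaᶜ) Paᶜ) sa sc :=
      strict_pres hsac1 (by rw [hM1]; exact nmem_c_d)
    have hseg := seg_spl m tail4
    have hf4m : spl m tail4 m = Qaᶜ := by simpa [tail4_0] using spl_ge m tail4 0
    have hf4m1 : spl m tail4 (m + 1) = Paᶜ := spl_ge m tail4 1
    have e2 : iterRev miniRev R (seg (spl m tail4) (m + 2)) =
        miniRev (miniRev (iterRev miniRev R (seg gab m)) Qaᶜ) Paᶜ := by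
      have e : m + 2 = (m + 1) + 1 := rfl
      rw [e, orderAt_succ, orderAt_succ, hf4m, hf4m1, hseg]
    have hfB : ∀ j, spl m tail4 (m + 2 + j) = Qa := fun j => by
      have e : m + 2 + j = m + (2 + j) := by ring
      rw [e, spl_ge]; exact tail4_ge (by omega)
    have hconj := const_conj Q_pair (spl m tail4) (m + 2) hfB
      (tpo_iterRev hR _) (by rw [e2]; exact hsac2)
    have hin : StreamIn Osp (spl m tail4) := by
      refine streamIn_spl fun j => ?_
      by_cases h0 : j = 0
      · rw [h0, tail4_0]; exact Qc_in
      by_cases h1 : j = 1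
      · rw [h1, tail4_1]; exact Pc_in
      · rw [tail4_ge (by omega)]; exact Q_in
    have hfair : FairStream Osp sc (spl m tail4) := by
      refine fair_spl ?_ ?_ ?_ ?_
      · intro r hr
        rcases obs_elim hr with ⟨rfl, h2⟩ | ⟨rfl, h2⟩ | ⟨rfl, h2⟩ | ⟨rfl, h2⟩
        · exact absurd h2 not_c_P
        · exact ⟨1, tail4_1⟩
        · exact ⟨2, tail4_ge le_rfl⟩
        · exact absurd h2 not_c_Qc
      · refine ⟨1, fun j hj => ?_⟩
        by_cases h1 : j = 1
        · rw [h1, tail4_1]; exact mem_c_Pc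
        · rw [tail4_ge (by omega)]; exact mem_c_Q
      · intro j hj
        by_cases h0 : j = 0
        · refine ⟨2, by omega, ?_⟩
          rw [h0, tail4_0, tail4_ge le_rfl, compl_compl]
        exfalso
        by_cases h1 : j = 1
        · rw [h1, tail4_1] at hj; exact hj mem_c_Pc
        · rw [tail4_ge (by omega)] at hj; exact hj mem_c_Q
      · intro i _ hi
        have hgi : gab i = Pa := by
          rcases gab_val i with h | h
          · exact h
          · rw [h] at hi; exact absurd mem_c_Q hi
        exact ⟨1, by rw [hgi]; exact tail4_1⟩
    obtain ⟨n, hn2⟩ := H sc _ hin hfair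
    have h1 := hn2 (m + 2 + n + 1) (by omega)
    rw [hconj n] at h1
    exact absurd (Set.singleton_eq_singleton_iff.mp h1) (by decide)
  -- Case B: c and d equiplausible; kill it with a stream for b.
  · have hA0 : minIn (iterRev miniRev R (seg gab m)) Paᶜ = {sc, sd} := by
      rw [Pc_pair']; exact minIn_pair_both hRm hcd hdc
    have hT1 : TotalPreorderOn (miniRev (iterRev miniRev R (seg gab m)) Paᶜ) :=
      tpo_miniRev hRm _
    have hsdb1 : strictR (miniRev (iterRev miniRev R (seg gab m)) Paᶜ) sd sb :=
      miniRev_strict (by rw [hA0]; exact mem_d_cd) (by rw [hA0]; exact nmem_b_cd)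
    have hsab1 : strictR (miniRev (iterRev miniRev R (seg gab m)) Paᶜ) sa sb :=
      strict_pres sab (by rw [hA0]; exact nmem_b_cd)
    have hM1 : minIn (miniRev (iterRev miniRev R (seg gab m)) Paᶜ) Qaᶜ = {sd} := by
      rw [Qc_pair]; exact minIn_pair hT1 hsdb1.1 hsdb1.2
    have hsab2 : strictR (miniRev (miniRev (iterRev miniRev R (seg gab m)) Paᶜ) Qaᶜ) sa sb :=
      strict_pres hsab1 (by rw [hM1]; exact nmem_b_d)
    have hseg := seg_spl m tail5
    have hf5m : spl m tail5 m = Paᶜ := by simpa [tail5_0] using spl_ge m tail5 0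
    have hf5m1 : spl m tail5 (m + 1) = Qaᶜ := spl_ge m tail5 1
    have e2 : iterRev miniRev R (seg (spl m tail5) (m + 2)) =
        miniRev (miniRev (iterRev miniRev R (seg gab m)) Paᶜ) Qaᶜ := by
      have e : m + 2 = (m + 1) + 1 := rfl
      rw [e, orderAt_succ, orderAt_succ, hf5m, hf5m1, hseg]
    have hfB : ∀ j, spl m tail5 (m + 2 + j) = Pa := fun j => by
      have e : m + 2 + j = m + (2 + j) := by ring
      rw [e, spl_ge]; exact tail5_ge (by omega)
    have hconj := const_conj P_pair (spl m tail5) (m + 2) hfB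
      (tpo_iterRev hR _) (by rw [e2]; exact hsab2)
    have hin : StreamIn Osp (spl m tail5) := by
      refine streamIn_spl fun j => ?_
      by_cases h0 : j = 0
      · rw [h0, tail5_0]; exact Pc_in
      by_cases h1 : j = 1
      · rw [h1, tail5_1]; exact Qc_in
      · rw [tail5_ge (by omega)]; exact P_in
    have hfair : FairStream Osp sb (spl m tail5) := by
      refine fair_spl ?_ ?_ ?_ ?_
      · intro r hr
        rcases obs_elim hr with ⟨rfl, h2⟩ | ⟨rfl, h2⟩ | ⟨rfl, h2⟩ | ⟨rfl, h2⟩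
        · exact ⟨2, tail5_ge le_rfl⟩
        · exact absurd h2 not_b_Pc
        · exact absurd h2 not_b_Q
        · exact ⟨1, tail5_1⟩
      · refine ⟨1, fun j hj => ?_⟩
        by_cases h1 : j = 1
        · rw [h1, tail5_1]; exact mem_b_Qc
        · rw [tail5_ge (by omega)]; exact mem_b_P
      · intro j hj
        by_cases h0 : j = 0
        · refine ⟨2, by omega, ?_⟩
          rw [h0, tail5_0, tail5_ge le_rfl, compl_compl]
        exfalso
        by_cases h1 : j = 1
        · rw [h1, tail5_1] at hj; exact hj mem_b_Qc
        · rw [tail5_ge (by omega)] at hj; exact hj mem_b_P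
      · intro i _ hi
        have hgi : gab i = Qa := by
          rcases gab_val i with h | h
          · rw [h] at hi; exact absurd mem_b_P hi
          · exact h
        exact ⟨1, by rw [hgi]; exact tail5_1⟩
    obtain ⟨n, hn2⟩ := H sb _ hin hfair
    have h1 := hn2 (m + 2 + n + 1) (by omega)
    rw [hconj n] at h1
    exact absurd (Set.singleton_eq_singleton_iff.mp h1) (by decide)

end Main

/-- Minimal revision is not universal on fair data streams on finite
negation-closed spaces: on the four-state space realizing all combinations of
`p/p̄` and `q/q̄`, no prior total preorder succeeds on all fair streams. -/
theorem mini_not_universal_on_fair_streams :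
    let p : Set (Bool × Bool) := {w | w.1 = true}
    let q : Set (Bool × Bool) := {w | w.2 = true}
    let O : Set (Set (Bool × Bool)) := {p, pᶜ, q, qᶜ}
    ¬ ∃ R : Bool × Bool → Bool × Bool → Prop, TotalPreorderOn R ∧
        ∀ s : Bool × Bool, ∀ f : ℕ → Set (Bool × Bool),
          StreamIn O f → FairStream O s f →
            ∃ n, ∀ k, n ≤ k → miniLearner R (seg f k) = {s} := by
  intro p q O
  exact key

end Epi
end

section
/- Let ≼ be a preorder on an epistemic space and s, t states with s ≺ t (s ≼ t and not t ≼ s). For any data stream sound with respect to s, the strict relation persists: after iterated lexicographic upgrade along any finite initial segment, s is still strictly below t. -/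
namespace Epi

variable {W : Type*}

theorem strictR_lexRev {R : W → W → Prop} {p : Set W} {s t : W}
    (hs : s ∈ p) (h : strictR R s t) : strictR (lexRev R p) s t := by
  by_cases ht : t ∈ p
  · refine ⟨Or.inl ⟨hs, ht, h.1⟩, ?_⟩
    rintro (⟨-, -, hts⟩ | ⟨htp, -⟩ | ⟨-, hsp⟩)
    exacts [h.2 hts, htp ht, hsp hs]
  · refine ⟨Or.inr (Or.inr ⟨hs, ht⟩), ?_⟩
    rintro (⟨htp, -⟩ | ⟨-, hsp, -⟩ | ⟨htp, -⟩)
    exacts [ht htp, hsp hs, ht htp]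

theorem strictR_iterRev_lexRev {R : W → W → Prop} {σ : List (Set W)} {s t : W}
    (hσ : ∀ p ∈ σ, s ∈ p) (h : strictR R s t) : strictR (iterRev lexRev R σ) s t := by
  induction σ generalizing R with
  | nil => exact h
  | cons p σ ih =>
    exact ih (fun q hq => hσ q (List.mem_cons_of_mem p hq))
      (strictR_lexRev (hσ p List.mem_cons_self) h)

theorem SoundStream.mem_of_mem_seg {s : W} {f : ℕ → Set W} (hsound : SoundStream s f)
    {n : ℕ} {p : Set W} (hp : p ∈ seg f n) : s ∈ p := by
  obtain ⟨i, -, rfl⟩ := List.mem_map.1 hp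
  exact hsound i

theorem lex_preserves_strict_general {W : Type*}
    (R : W → W → Prop)
    (s t : W) (h : strictR R s t)
    (f : ℕ → Set W) (hsound : SoundStream s f) :
    ∀ n : ℕ, strictR (iterRev lexRev R (seg f n)) s t :=
  fun _ => strictR_iterRev_lexRev (fun _ => hsound.mem_of_mem_seg) h

/-- Strict plausibility `s ≺ t` persists under iterated lexicographic
upgrade along any sound stream for `s`. -/
theorem lex_preserves_strict {W : Type*} (O : Set (Set W))
    (R : W → W → Prop) (hR : PreorderOn R)
    (s t : W) (h : strictR R s t)
    (f : ℕ → Set W) (hin : StreamIn O f) (hsound : SoundStream s f) :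
    ∀ n : ℕ, strictR (iterRev lexRev R (seg f n)) s t :=
  lex_preserves_strict_general R s t h f hsound

end Epi
end

section
/- Let ≼ be a preorder on an epistemic space and s a ≼-minimal element of S. Then for any data stream sound with respect to s and any n, s is a minimal element of the preorder obtained by iterated lexicographic upgrade along the first n observations. -/
namespace Epi

variable {W : Type*}

theorem lexRev_comparable_of_mem {R : W → W → Prop} {p : Set W} {s t : W} (hs : s ∈ p)
    (ht : t ∈ p) (h : lexRev R p s t ∨ lexRev R p t s) : R s t ∨ R t s := by
  unfold lexRev at h
  rcases h with (⟨-, -, h⟩ | ⟨h, -⟩ | ⟨-, h⟩) | (⟨-, -, h⟩ | ⟨h, -⟩ | ⟨-, h⟩)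
  exacts [.inl h, absurd hs h, absurd ht h, .inr h, absurd ht h, absurd hs h]

/-- Inside `p` the upgrade keeps the old order, and it puts every world outside `p` above `s`. -/
theorem mem_minIn_univ_lexRev {R : W → W → Prop} {p : Set W} {s : W} (hs : s ∈ p)
    (hmin : s ∈ minIn R Set.univ) : s ∈ minIn (lexRev R p) Set.univ := by
  refine ⟨trivial, fun t _ hcomp => ?_⟩
  by_cases ht : t ∈ p
  · exact .inl ⟨hs, ht, hmin.2 t trivial (lexRev_comparable_of_mem hs ht hcomp)⟩
  · exact .inr (.inr ⟨hs, ht⟩)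

theorem mem_minIn_univ_iterRev_lexRev {R : W → W → Prop} {σ : List (Set W)} {s : W}
    (hσ : ∀ p ∈ σ, s ∈ p) (hmin : s ∈ minIn R Set.univ) :
    s ∈ minIn (iterRev lexRev R σ) Set.univ := by
  induction σ generalizing R with
  | nil => exact hmin
  | cons p σ ih =>
    exact ih (fun q hq => hσ q (List.mem_cons_of_mem p hq))
      (mem_minIn_univ_lexRev (hσ p List.mem_cons_self) hmin)

theorem lex_preserves_minimality_general {W : Type*}
    (R : W → W → Prop)
    (s : W) (hmin : s ∈ minIn R Set.univ)
    (f : ℕ → Set W) (hsound : SoundStream s f) :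
    ∀ n : ℕ, s ∈ minIn (iterRev lexRev R (seg f n)) Set.univ := by
  intro n
  refine mem_minIn_univ_iterRev_lexRev (fun p hp => ?_) hmin
  obtain ⟨i, -, rfl⟩ := List.mem_map.mp hp
  exact hsound i

/-- A `≼`-minimal state stays minimal under iterated lexicographic
upgrade along any sound stream for it. -/
theorem lex_preserves_minimality {W : Type*} (O : Set (Set W))
    (R : W → W → Prop) (hR : PreorderOn R)
    (s : W) (hmin : s ∈ minIn R Set.univ)
    (f : ℕ → Set W) (hin : StreamIn O f) (hsound : SoundStream s f) :
    ∀ n : ℕ, s ∈ minIn (iterRev lexRev R (seg f n)) Set.univ :=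
  lex_preserves_minimality_general R s hmin f hsound

end Epi
end
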